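/- If f: H → k is a dual group-like linear form on a weak Hopf algebra H, then f(S(x)) = f̄(x) for all x ∈ H, where f̄ is the convolution inverse of f, and moreover f(ε_s(x)) = ε(x) = f(ε_t(x)) for all x ∈ H. -/

import Mathlib

open TensorProduct LinearMap

namespace WeakBialgebraPaper

variable (k H : Type*) [CommRing k] [Ring H] [Algebra k H] [Coalgebra k H]

/-- `x ⊗ y ↦ ε (x * y)`. -/
noncomputable def counitMul : H ⊗[k] H →ₗ[k] k :=
  Coalgebra.counit ∘ₗ LinearMap.mul' k H

/-- ε∘μ∘(μ⊗id) : (H⊗H)⊗H → k -/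
noncomputable def weakCounitLHS : (H ⊗[k] H) ⊗[k] H →ₗ[k] k :=
  Coalgebra.counit ∘ₗ LinearMap.mul' k H ∘ₗ LinearMap.rTensor H (LinearMap.mul' k H)

/-- (ε⊗ε)∘(μ⊗μ)∘(id⊗Δ⊗id), with `Δ' = d` inserted in the middle slot. -/
noncomputable def weakCounitRHS (d : H →ₗ[k] H ⊗[k] H) : (H ⊗[k] H) ⊗[k] H →ₗ[k] k :=
  (TensorProduct.lid k k).toLinearMap
    ∘ₗ TensorProduct.map (counitMul k H) (counitMul k H)
    ∘ₗ (TensorProduct.assoc k (H ⊗[k] H) H H).toLinearMap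
    ∘ₗ LinearMap.rTensor H (TensorProduct.assoc k H H H).symm.toLinearMap
    ∘ₗ LinearMap.rTensor H (LinearMap.lTensor H d)

/-- (id⊗μ'⊗id)∘(Δ⊗Δ) applied to 1⊗1, with multiplication `m` in the middle. -/
noncomputable def weakUnitRHS (m : H ⊗[k] H →ₗ[k] H) : (H ⊗[k] H) ⊗[k] H :=
  (LinearMap.rTensor H (LinearMap.lTensor H m))
    ((LinearMap.rTensor H (TensorProduct.assoc k H H H).toLinearMap)
      ((TensorProduct.assoc k (H ⊗[k] H) H H).symm
        (Coalgebra.comul (R := k) (1 : H) ⊗ₜ[k] Coalgebra.comul (R := k) (1 : H))))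

/-- A weak bialgebra in the sense of Böhm–Nill–Szlachányi. -/
class WeakBialgebra : Prop where
  comul_mul : ∀ x y : H, Coalgebra.comul (R := k) (x * y) = Coalgebra.comul x * Coalgebra.comul y
  weak_counit :
    weakCounitLHS k H = weakCounitRHS k H Coalgebra.comul
  weak_counit_op :
    weakCounitLHS k H =
      weakCounitRHS k H ((TensorProduct.comm k H H).toLinearMap ∘ₗ Coalgebra.comul)
  weak_unit :
    LinearMap.rTensor H (Coalgebra.comul (R := k)) (Coalgebra.comul (R := k) (1 : H)) =
      weakUnitRHS k H (LinearMap.mul' k H)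
  weak_unit_op :
    LinearMap.rTensor H (Coalgebra.comul (R := k)) (Coalgebra.comul (R := k) (1 : H)) =
      weakUnitRHS k H (LinearMap.mul' k H ∘ₗ (TensorProduct.comm k H H).toLinearMap)

/-- The target counital map `ε_t(x) = ε(1' x) 1''`. -/
noncomputable def εt : H →ₗ[k] H :=
  (TensorProduct.rid k H).toLinearMap
    ∘ₗ LinearMap.lTensor H (counitMul k H)
    ∘ₗ (TensorProduct.assoc k H H H).toLinearMap
    ∘ₗ LinearMap.rTensor H (TensorProduct.comm k H H).toLinearMap
    ∘ₗ TensorProduct.mk k (H ⊗[k] H) H (Coalgebra.comul (R := k) (1 : H))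

/-- The source counital map `ε_s(x) = 1' ε(x 1'')`. -/
noncomputable def εs : H →ₗ[k] H :=
  (TensorProduct.rid k H).toLinearMap
    ∘ₗ LinearMap.lTensor H (counitMul k H ∘ₗ (TensorProduct.comm k H H).toLinearMap)
    ∘ₗ (TensorProduct.assoc k H H H).toLinearMap
    ∘ₗ TensorProduct.mk k (H ⊗[k] H) H (Coalgebra.comul (R := k) (1 : H))

end WeakBialgebraPaper

namespace WeakBialgebraPaper

variable (k H : Type*) [CommRing k] [Ring H] [Algebra k H] [Coalgebra k H]

/-- `S` is an antipode for the weak bialgebra `H`: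
`x' S(x'') = ε_t(x)`, `S(x') x'' = ε_s(x)` and `S(x') x'' S(x''') = S(x)`. -/
noncomputable def IsAntipode (S : H →ₗ[k] H) : Prop :=
  (LinearMap.mul' k H ∘ₗ LinearMap.lTensor H S ∘ₗ Coalgebra.comul = εt k H) ∧
  (LinearMap.mul' k H ∘ₗ LinearMap.rTensor H S ∘ₗ Coalgebra.comul = εs k H) ∧
  (LinearMap.mul' k H ∘ₗ LinearMap.rTensor H (LinearMap.mul' k H)
      ∘ₗ TensorProduct.map (LinearMap.rTensor H S) S
      ∘ₗ LinearMap.rTensor H (Coalgebra.comul (R := k))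
      ∘ₗ Coalgebra.comul = S)

end WeakBialgebraPaper

namespace WeakBialgebraPaper

variable (k H : Type*) [CommRing k] [Ring H] [Algebra k H] [Coalgebra k H]

/-- Convolution product of linear forms, `(f * g)(x) = f(x') g(x'')`. -/
noncomputable def conv (f g : H →ₗ[k] k) : H →ₗ[k] k :=
  (TensorProduct.lid k k).toLinearMap ∘ₗ TensorProduct.map f g ∘ₗ Coalgebra.comul

/-- `x ⊗ y ↦ f(x) g(y)`. -/
noncomputable def pairForm (f g : H →ₗ[k] k) : H ⊗[k] H →ₗ[k] k :=
  (TensorProduct.lid k k).toLinearMap ∘ₗ TensorProduct.map f g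

/-- `f` is a dual group-like linear form with convolution inverse `fbar`:
`f` and `fbar` are mutually convolution inverse and
`f(x')f(y')ε(x''y'') = f(xy) = ε(x'y')f(x'')f(y'')`. -/
noncomputable def IsDualGroupLike (f fbar : H →ₗ[k] k) : Prop :=
  conv k H f fbar = Coalgebra.counit ∧
  conv k H fbar f = Coalgebra.counit ∧
  ((TensorProduct.lid k k).toLinearMap
      ∘ₗ TensorProduct.map (pairForm k H f f) (counitMul k H)
      ∘ₗ (TensorProduct.tensorTensorTensorComm k H H H H).toLinearMap
      ∘ₗ TensorProduct.map (Coalgebra.comul (R := k)) (Coalgebra.comul (R := k))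
    = f ∘ₗ LinearMap.mul' k H) ∧
  ((TensorProduct.lid k k).toLinearMap
      ∘ₗ TensorProduct.map (counitMul k H) (pairForm k H f f)
      ∘ₗ (TensorProduct.tensorTensorTensorComm k H H H H).toLinearMap
      ∘ₗ TensorProduct.map (Coalgebra.comul (R := k)) (Coalgebra.comul (R := k))
    = f ∘ₗ LinearMap.mul' k H)

end WeakBialgebraPaper

namespace WeakBialgebraPaper
section Lemmas

open TensorProduct LinearMap
open scoped Coalgebra

variable {k H : Type*} [CommRing k] [Ring H] [Algebra k H] [Coalgebra k H]

lemma counitMul_tmul (a b : H) :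
    counitMul k H (a ⊗ₜ[k] b) = Coalgebra.counit (R := k) (a * b) := by
  simp [counitMul]

omit [Coalgebra k H] in
lemma pairForm_tmul (p q : H →ₗ[k] k) (a b : H) :
    pairForm k H p q (a ⊗ₜ[k] b) = p a * q b := by
  simp [pairForm, smul_eq_mul]

lemma conv_repr (p q : H →ₗ[k] k) (x : H) (rx : Coalgebra.Repr k x (H × H)) :
    conv k H p q x = ∑ i ∈ rx.index, p (rx.left i) * q (rx.right i) := by
  simp only [conv, coe_comp, LinearEquiv.coe_coe, Function.comp_apply, ← rx.eq, map_sum,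
    TensorProduct.map_tmul, TensorProduct.lid_tmul, smul_eq_mul]

lemma sum_counit_right_smul (z : H) (rz : Coalgebra.Repr k z (H × H)) :
    ∑ i ∈ rz.index, Coalgebra.counit (R := k) (rz.right i) • rz.left i = z := by
  have h := Coalgebra.sum_tmul_counit_eq (R := k) rz
  calc ∑ i ∈ rz.index, Coalgebra.counit (R := k) (rz.right i) • rz.left i
      = TensorProduct.rid k H (∑ i ∈ rz.index,
          rz.left i ⊗ₜ[k] Coalgebra.counit (R := k) (rz.right i)) := by
        rw [map_sum]; simp only [rid_tmul]
    _ = TensorProduct.rid k H (z ⊗ₜ[k] 1) := by rw [h]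
    _ = z := by simp

lemma sum_counit_left_smul (z : H) (rz : Coalgebra.Repr k z (H × H)) :
    ∑ i ∈ rz.index, Coalgebra.counit (R := k) (rz.left i) • rz.right i = z := by
  have h := Coalgebra.sum_counit_tmul_eq (R := k) rz
  calc ∑ i ∈ rz.index, Coalgebra.counit (R := k) (rz.left i) • rz.right i
      = TensorProduct.lid k H (∑ i ∈ rz.index,
          Coalgebra.counit (R := k) (rz.left i) ⊗ₜ[k] rz.right i) := by
        rw [map_sum]; simp only [lid_tmul]
    _ = TensorProduct.lid k H ((1 : k) ⊗ₜ[k] z) := by rw [h]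
    _ = z := by simp

lemma conv_counit_right (p : H →ₗ[k] k) : conv k H p Coalgebra.counit = p := by
  ext x
  rw [conv_repr p _ x (ℛ k x)]
  conv_rhs => rw [← sum_counit_right_smul x (ℛ k x)]
  rw [map_sum]
  exact Finset.sum_congr rfl fun i _ => by rw [map_smul, smul_eq_mul, mul_comm]

lemma conv_counit_left (p : H →ₗ[k] k) : conv k H Coalgebra.counit p = p := by
  ext x
  rw [conv_repr _ p x (ℛ k x)]
  conv_rhs => rw [← sum_counit_left_smul x (ℛ k x)]
  rw [map_sum]
  exact Finset.sum_congr rfl fun i _ => by rw [map_smul, smul_eq_mul]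

lemma εt_repr (x : H) (r1 : Coalgebra.Repr k (1 : H) (H × H)) :
    εt k H x = ∑ p ∈ r1.index,
      Coalgebra.counit (R := k) (r1.left p * x) • r1.right p := by
  simp only [εt, coe_comp, LinearEquiv.coe_coe, Function.comp_apply, ← r1.eq, map_sum,
    LinearMap.sum_apply, TensorProduct.mk_apply, rTensor_tmul, comm_tmul, assoc_tmul,
    lTensor_tmul, counitMul_tmul, rid_tmul]

lemma εs_repr (x : H) (r1 : Coalgebra.Repr k (1 : H) (H × H)) :
    εs k H x = ∑ p ∈ r1.index,
      Coalgebra.counit (R := k) (x * r1.right p) • r1.left p := by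
  simp only [εs, coe_comp, LinearEquiv.coe_coe, Function.comp_apply, ← r1.eq, map_sum,
    LinearMap.sum_apply, TensorProduct.mk_apply, assoc_tmul, lTensor_tmul, comm_tmul,
    counitMul_tmul, rid_tmul]

end Lemmas
end WeakBialgebraPaper
namespace WeakBialgebraPaper
section Lemmas2

open TensorProduct LinearMap
open scoped Coalgebra

variable {k H : Type*} [CommRing k] [Ring H] [Algebra k H] [Coalgebra k H]

lemma coassoc_tri (φ : H →ₗ[k] H →ₗ[k] H →ₗ[k] k) (x : H) (rx : Coalgebra.Repr k x (H × H))
    (r1 : ∀ i : rx.ι, Coalgebra.Repr k (rx.left i) (H × H))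
    (r2 : ∀ i : rx.ι, Coalgebra.Repr k (rx.right i) (H × H)) :
    ∑ i ∈ rx.index, ∑ j ∈ (r1 i).index,
        φ ((r1 i).left j) ((r1 i).right j) (rx.right i)
    = ∑ i ∈ rx.index, ∑ j ∈ (r2 i).index,
        φ (rx.left i) ((r2 i).left j) ((r2 i).right j) := by
  have h := Coalgebra.sum_tmul_tmul_eq rx r1 r2
  have h2 := congrArg (TensorProduct.lift ((TensorProduct.uncurry (RingHom.id k) H H k) ∘ₗ φ)) h
  simpa only [map_sum, TensorProduct.lift.tmul, coe_comp, Function.comp_apply,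
    TensorProduct.uncurry_apply] using h2

lemma map_counit_collapse (f : H →ₗ[k] k) (z : H) :
    (TensorProduct.lid k k)
      ((TensorProduct.map f Coalgebra.counit) (Coalgebra.comul (R := k) z)) = f z := by
  have h := sum_counit_right_smul z (ℛ k z)
  rw [← (ℛ k z).eq]
  simp only [map_sum, TensorProduct.map_tmul, TensorProduct.lid_tmul, smul_eq_mul]
  rw [← congrArg f h, map_sum]
  exact Finset.sum_congr rfl fun i _ => by
    rw [map_smul, smul_eq_mul, mul_comm]

lemma DG1 {f : H →ₗ[k] k}
    (h : (TensorProduct.lid k k).toLinearMap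
      ∘ₗ TensorProduct.map (pairForm k H f f) (counitMul k H)
      ∘ₗ (TensorProduct.tensorTensorTensorComm k H H H H).toLinearMap
      ∘ₗ TensorProduct.map (Coalgebra.comul (R := k)) (Coalgebra.comul (R := k))
      = f ∘ₗ LinearMap.mul' k H)
    (x y : H) (rx : Coalgebra.Repr k x (H × H)) (ry : Coalgebra.Repr k y (H × H)) :
    f (x * y) = ∑ i ∈ rx.index, ∑ j ∈ ry.index,
      f (rx.left i) * f (ry.left j) *
        Coalgebra.counit (R := k) (rx.right i * ry.right j) := by
  have h2 := LinearMap.congr_fun h (x ⊗ₜ[k] y)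
  simp only [coe_comp, Function.comp_apply, LinearEquiv.coe_coe, TensorProduct.map_tmul,
    mul'_apply, ← rx.eq, ← ry.eq, sum_tmul, tmul_sum, map_sum,
    tensorTensorTensorComm_tmul, pairForm_tmul, counitMul_tmul,
    TensorProduct.lid_tmul, smul_eq_mul] at h2
  rw [Finset.sum_comm]
  exact h2.symm

lemma DG2 {f : H →ₗ[k] k}
    (h : (TensorProduct.lid k k).toLinearMap
      ∘ₗ TensorProduct.map (counitMul k H) (pairForm k H f f)
      ∘ₗ (TensorProduct.tensorTensorTensorComm k H H H H).toLinearMap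
      ∘ₗ TensorProduct.map (Coalgebra.comul (R := k)) (Coalgebra.comul (R := k))
      = f ∘ₗ LinearMap.mul' k H)
    (x y : H) (rx : Coalgebra.Repr k x (H × H)) (ry : Coalgebra.Repr k y (H × H)) :
    f (x * y) = ∑ i ∈ rx.index, ∑ j ∈ ry.index,
      Coalgebra.counit (R := k) (rx.left i * ry.left j) *
        (f (rx.right i) * f (ry.right j)) := by
  have h2 := LinearMap.congr_fun h (x ⊗ₜ[k] y)
  simp only [coe_comp, Function.comp_apply, LinearEquiv.coe_coe, TensorProduct.map_tmul,
    mul'_apply, ← rx.eq, ← ry.eq, sum_tmul, tmul_sum, map_sum,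
    tensorTensorTensorComm_tmul, pairForm_tmul, counitMul_tmul,
    TensorProduct.lid_tmul, smul_eq_mul] at h2
  rw [Finset.sum_comm]
  exact h2.symm

set_option synthInstance.maxHeartbeats 400000 in
lemma weak_counit_op_repr [WeakBialgebra k H] (u w : H) (r1 : Coalgebra.Repr k (1 : H) (H × H)) :
    Coalgebra.counit (R := k) (u * w) = ∑ p ∈ r1.index,
      Coalgebra.counit (R := k) (u * r1.right p) *
        Coalgebra.counit (R := k) (r1.left p * w) := by
  have h := LinearMap.congr_fun (WeakBialgebra.weak_counit_op (k := k) (H := H))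
    ((u ⊗ₜ[k] (1 : H)) ⊗ₜ[k] w)
  simp only [weakCounitLHS, weakCounitRHS, coe_comp, Function.comp_apply, LinearEquiv.coe_coe,
    rTensor_tmul, lTensor_tmul, mul'_apply, mul_one, ← r1.eq, map_sum, comm_tmul,
    tmul_sum, sum_tmul, assoc_symm_tmul, assoc_tmul, TensorProduct.map_tmul,
    counitMul_tmul, TensorProduct.lid_tmul, smul_eq_mul] at h
  exact h

end Lemmas2
end WeakBialgebraPaper
namespace WeakBialgebraPaper
section Lemmas3

open TensorProduct LinearMap
open scoped Coalgebra

variable {k H : Type*} [CommRing k] [Ring H] [Algebra k H] [Coalgebra k H]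

set_option synthInstance.maxHeartbeats 1000000 in
lemma weak_unit_op_repr [WeakBialgebra k H] (r1 : Coalgebra.Repr k (1 : H) (H × H)) :
    ∑ p ∈ r1.index, Coalgebra.comul (R := k) (r1.left p) ⊗ₜ[k] r1.right p
    = ∑ p ∈ r1.index, ∑ q ∈ r1.index,
        (r1.left p ⊗ₜ[k] (r1.left q * r1.right p)) ⊗ₜ[k] r1.right q := by
  have h := WeakBialgebra.weak_unit_op (k := k) (H := H)
  rw [weakUnitRHS] at h
  rw [← r1.eq] at h
  simp only [map_sum, rTensor_tmul, sum_tmul, tmul_sum, assoc_symm_tmul, assoc_tmul,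
    lTensor_tmul, coe_comp, Function.comp_apply, LinearEquiv.coe_coe, comm_tmul,
    mul'_apply] at h
  rw [Finset.sum_comm] at h
  exact h

/-- `y ⊗ z ↦ ∑ₚ (y ⊗ (1⁽¹⁾ₚ * z)) ⊗ 1⁽²⁾ₚ`. -/
noncomputable def lam (r1 : Coalgebra.Repr k (1 : H) (H × H)) :
    H ⊗[k] H →ₗ[k] (H ⊗[k] H) ⊗[k] H :=
  ∑ p ∈ r1.index, ((TensorProduct.mk k (H ⊗[k] H) H).flip (r1.right p)) ∘ₗ
      (LinearMap.lTensor H (LinearMap.mulLeft k (r1.left p)))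

lemma lam_tmul (r1 : Coalgebra.Repr k (1 : H) (H × H)) (a b : H) :
    lam r1 (a ⊗ₜ[k] b)
      = ∑ p ∈ r1.index, (a ⊗ₜ[k] (r1.left p * b)) ⊗ₜ[k] r1.right p := by
  simp only [lam, LinearMap.sum_apply, coe_comp, Function.comp_apply, lTensor_tmul,
    LinearMap.mulLeft_apply, LinearMap.flip_apply, TensorProduct.mk_apply]

set_option synthInstance.maxHeartbeats 1000000 in
lemma T_repr [WeakBialgebra k H] (r1 : Coalgebra.Repr k (1 : H) (H × H)) (g : H)
    (rg : Coalgebra.Repr k g (H × H)) :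
    ∑ i ∈ rg.index, ∑ p ∈ r1.index,
        (rg.left i ⊗ₜ[k] (r1.left p * rg.right i)) ⊗ₜ[k] r1.right p
    = ∑ p ∈ r1.index, Coalgebra.comul (R := k) (r1.left p * g) ⊗ₜ[k] r1.right p := by
  have h4 := congrArg
    (LinearMap.rTensor H (LinearMap.mulRight k (Coalgebra.comul (R := k) g)))
    (weak_unit_op_repr r1)
  simp only [map_sum, rTensor_tmul, LinearMap.mulRight_apply] at h4
  have hL : ∑ i ∈ rg.index, ∑ p ∈ r1.index,
        (rg.left i ⊗ₜ[k] (r1.left p * rg.right i)) ⊗ₜ[k] r1.right p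
      = lam r1 (Coalgebra.comul (R := k) g) := by
    rw [← rg.eq, map_sum]
    simp only [lam_tmul]
  have hone : Coalgebra.comul (R := k) g
      = Coalgebra.comul (R := k) (1 : H) * Coalgebra.comul (R := k) g := by
    rw [← WeakBialgebra.comul_mul, one_mul]
  have E1 : lam r1 (Coalgebra.comul (R := k) g)
      = ∑ p ∈ r1.index, ∑ q ∈ r1.index,
          ((r1.left p ⊗ₜ[k] (r1.left q * r1.right p)) * Coalgebra.comul (R := k) g)
            ⊗ₜ[k] r1.right q := by
    conv_lhs => rw [hone, ← r1.eq, ← rg.eq, Finset.sum_mul_sum]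
    conv_rhs => rw [← rg.eq]
    simp only [Algebra.TensorProduct.tmul_mul_tmul, map_sum, lam_tmul, Finset.mul_sum,
      sum_tmul]
    refine Finset.sum_congr rfl fun p _ => ?_
    rw [Finset.sum_comm]
    simp only [mul_assoc]
  rw [hL, E1, ← h4]
  simp only [← WeakBialgebra.comul_mul]

lemma W8 [WeakBialgebra k H] (f : H →ₗ[k] k) (r1 : Coalgebra.Repr k (1 : H) (H × H))
    (u w : H) (rw : Coalgebra.Repr k w (H × H)) :
    ∑ j ∈ rw.index, f (rw.left j) * Coalgebra.counit (R := k) (u * rw.right j)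
    = ∑ p ∈ r1.index, f (r1.left p * w) * Coalgebra.counit (R := k) (u * r1.right p) := by
  have hθ := congrArg
    ((TensorProduct.lid k k).toLinearMap ∘ₗ
      TensorProduct.map
        ((TensorProduct.lid k k).toLinearMap ∘ₗ TensorProduct.map f Coalgebra.counit)
        (Coalgebra.counit ∘ₗ LinearMap.mulLeft k u))
    (T_repr r1 w rw)
  simp only [map_sum, coe_comp, Function.comp_apply, LinearEquiv.coe_coe,
    TensorProduct.map_tmul, TensorProduct.lid_tmul, smul_eq_mul,
    LinearMap.mulLeft_apply, map_counit_collapse] at hθ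
  rw [← hθ]
  refine Finset.sum_congr rfl fun j _ => ?_
  rw [weak_counit_op_repr u (rw.right j) r1, Finset.mul_sum]
  exact Finset.sum_congr rfl fun p _ => by ring

lemma antipode1_repr {S : H →ₗ[k] H}
    (h1 : LinearMap.mul' k H ∘ₗ LinearMap.lTensor H S ∘ₗ Coalgebra.comul = εt k H)
    (x : H) (rx : Coalgebra.Repr k x (H × H)) :
    ∑ i ∈ rx.index, rx.left i * S (rx.right i) = εt k H x := by
  have h := LinearMap.congr_fun h1 x
  simp only [coe_comp, Function.comp_apply, ← rx.eq, map_sum, lTensor_tmul, mul'_apply] at h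
  exact h

lemma antipode2_repr {S : H →ₗ[k] H}
    (h2 : LinearMap.mul' k H ∘ₗ LinearMap.rTensor H S ∘ₗ Coalgebra.comul = εs k H)
    (x : H) (rx : Coalgebra.Repr k x (H × H)) :
    ∑ i ∈ rx.index, S (rx.left i) * rx.right i = εs k H x := by
  have h := LinearMap.congr_fun h2 x
  simp only [coe_comp, Function.comp_apply, ← rx.eq, map_sum, rTensor_tmul, mul'_apply] at h
  exact h

lemma antipode_εs_S {S : H →ₗ[k] H}
    (h2 : LinearMap.mul' k H ∘ₗ LinearMap.rTensor H S ∘ₗ Coalgebra.comul = εs k H)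
    (h3 : LinearMap.mul' k H ∘ₗ LinearMap.rTensor H (LinearMap.mul' k H)
      ∘ₗ TensorProduct.map (LinearMap.rTensor H S) S
      ∘ₗ LinearMap.rTensor H (Coalgebra.comul (R := k))
      ∘ₗ Coalgebra.comul = S)
    (x : H) (rx : Coalgebra.Repr k x (H × H)) :
    ∑ i ∈ rx.index, εs k H (rx.left i) * S (rx.right i) = S x := by
  have h := LinearMap.congr_fun h3 x
  have h2' : ∀ z : H,
      LinearMap.mul' k H (LinearMap.rTensor H S (Coalgebra.comul (R := k) z))
        = εs k H z := fun z => by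
    have := LinearMap.congr_fun h2 z
    simpa only [coe_comp, Function.comp_apply] using this
  simp only [coe_comp, Function.comp_apply, ← rx.eq, map_sum, rTensor_tmul,
    TensorProduct.map_tmul, mul'_apply, h2'] at h
  exact h

end Lemmas3
end WeakBialgebraPaper
namespace WeakBialgebraPaper
section Lemmas4

open TensorProduct LinearMap
open scoped Coalgebra

variable {k H : Type*} [CommRing k] [Ring H] [Algebra k H] [Coalgebra k H]

lemma conv_assoc (p q r : H →ₗ[k] k) :
    conv k H (conv k H p q) r = conv k H p (conv k H q r) := by
  ext x
  have key := coassoc_tri (p.smulRight (q.smulRight r)) x (ℛ k x)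
      (fun i => ℛ k ((ℛ k x).left i)) (fun i => ℛ k ((ℛ k x).right i))
  simp only [LinearMap.smulRight_apply, LinearMap.smul_apply, smul_eq_mul] at key
  rw [conv_repr (conv k H p q) r x (ℛ k x), conv_repr p (conv k H q r) x (ℛ k x)]
  refine Eq.trans ?_ (Eq.trans key ?_)
  · refine Finset.sum_congr rfl fun i _ => ?_
    rw [conv_repr p q _ (ℛ k ((ℛ k x).left i)), Finset.sum_mul]
    exact Finset.sum_congr rfl fun j _ => by ring
  · refine Finset.sum_congr rfl fun i _ => ?_
    rw [conv_repr q r _ (ℛ k ((ℛ k x).right i)), Finset.mul_sum]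

lemma f_εt_apply (f : H →ₗ[k] k) (r1 : Coalgebra.Repr k (1 : H) (H × H)) (z : H) :
    f (εt k H z) = ∑ p ∈ r1.index,
      Coalgebra.counit (R := k) (r1.left p * z) * f (r1.right p) := by
  rw [εt_repr z r1, map_sum]
  exact Finset.sum_congr rfl fun p _ => by rw [map_smul, smul_eq_mul]

lemma f_εs_apply (f : H →ₗ[k] k) (r1 : Coalgebra.Repr k (1 : H) (H × H)) (z : H) :
    f (εs k H z) = ∑ p ∈ r1.index,
      Coalgebra.counit (R := k) (z * r1.right p) * f (r1.left p) := by
  rw [εs_repr z r1, map_sum]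
  exact Finset.sum_congr rfl fun p _ => by rw [map_smul, smul_eq_mul]

lemma conv_εt_f {f : H →ₗ[k] k}
    (h : (TensorProduct.lid k k).toLinearMap
      ∘ₗ TensorProduct.map (counitMul k H) (pairForm k H f f)
      ∘ₗ (TensorProduct.tensorTensorTensorComm k H H H H).toLinearMap
      ∘ₗ TensorProduct.map (Coalgebra.comul (R := k)) (Coalgebra.comul (R := k))
      = f ∘ₗ LinearMap.mul' k H) :
    conv k H (f ∘ₗ εt k H) f = f := by
  ext x
  have h2 := DG2 h 1 x (ℛ k (1 : H)) (ℛ k x)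
  rw [one_mul] at h2
  rw [conv_repr (f ∘ₗ εt k H) f x (ℛ k x), h2, Finset.sum_comm]
  refine Finset.sum_congr rfl fun i _ => ?_
  rw [coe_comp, Function.comp_apply, f_εt_apply f (ℛ k (1 : H)), Finset.sum_mul]
  exact Finset.sum_congr rfl fun p _ => by ring

lemma conv_f_εs {f : H →ₗ[k] k}
    (h : (TensorProduct.lid k k).toLinearMap
      ∘ₗ TensorProduct.map (pairForm k H f f) (counitMul k H)
      ∘ₗ (TensorProduct.tensorTensorTensorComm k H H H H).toLinearMap
      ∘ₗ TensorProduct.map (Coalgebra.comul (R := k)) (Coalgebra.comul (R := k))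
      = f ∘ₗ LinearMap.mul' k H) :
    conv k H f (f ∘ₗ εs k H) = f := by
  ext x
  have h2 := DG1 h x 1 (ℛ k x) (ℛ k (1 : H))
  rw [mul_one] at h2
  rw [conv_repr f (f ∘ₗ εs k H) x (ℛ k x), h2]
  refine Finset.sum_congr rfl fun i _ => ?_
  rw [coe_comp, Function.comp_apply, f_εs_apply f (ℛ k (1 : H)), Finset.mul_sum]
  exact Finset.sum_congr rfl fun p _ => by ring

lemma f_comp_εt {f fbar : H →ₗ[k] k} (hf : IsDualGroupLike k H f fbar) :
    f ∘ₗ εt k H = Coalgebra.counit := by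
  calc f ∘ₗ εt k H = conv k H (f ∘ₗ εt k H) Coalgebra.counit := (conv_counit_right _).symm
    _ = conv k H (f ∘ₗ εt k H) (conv k H f fbar) := by rw [hf.1]
    _ = conv k H (conv k H (f ∘ₗ εt k H) f) fbar := (conv_assoc _ _ _).symm
    _ = conv k H f fbar := by rw [conv_εt_f hf.2.2.2]
    _ = Coalgebra.counit := hf.1

lemma f_comp_εs {f fbar : H →ₗ[k] k} (hf : IsDualGroupLike k H f fbar) :
    f ∘ₗ εs k H = Coalgebra.counit := by
  calc f ∘ₗ εs k H = conv k H Coalgebra.counit (f ∘ₗ εs k H) := (conv_counit_left _).symm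
    _ = conv k H (conv k H fbar f) (f ∘ₗ εs k H) := by rw [hf.2.1]
    _ = conv k H fbar (conv k H f (f ∘ₗ εs k H)) := conv_assoc _ _ _
    _ = conv k H fbar f := by rw [conv_f_εs hf.2.2.1]
    _ = Coalgebra.counit := hf.2.1

end Lemmas4
end WeakBialgebraPaper
namespace WeakBialgebraPaper
section Lemmas5

open TensorProduct LinearMap
open scoped Coalgebra

variable {k H : Type*} [CommRing k] [Ring H] [Algebra k H] [Coalgebra k H]

lemma conv_f_fS [WeakBialgebra k H] {f : H →ₗ[k] k} {S : H →ₗ[k] H}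
    (hdg1 : (TensorProduct.lid k k).toLinearMap
      ∘ₗ TensorProduct.map (pairForm k H f f) (counitMul k H)
      ∘ₗ (TensorProduct.tensorTensorTensorComm k H H H H).toLinearMap
      ∘ₗ TensorProduct.map (Coalgebra.comul (R := k)) (Coalgebra.comul (R := k))
      = f ∘ₗ LinearMap.mul' k H)
    (hfεt : ∀ z : H, f (εt k H z) = Coalgebra.counit (R := k) z)
    (hS1 : LinearMap.mul' k H ∘ₗ LinearMap.lTensor H S ∘ₗ Coalgebra.comul = εt k H)
    (hS2 : LinearMap.mul' k H ∘ₗ LinearMap.rTensor H S ∘ₗ Coalgebra.comul = εs k H)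
    (hS3 : LinearMap.mul' k H ∘ₗ LinearMap.rTensor H (LinearMap.mul' k H)
      ∘ₗ TensorProduct.map (LinearMap.rTensor H S) S
      ∘ₗ LinearMap.rTensor H (Coalgebra.comul (R := k))
      ∘ₗ Coalgebra.comul = S) :
    conv k H f (f ∘ₗ S) = Coalgebra.counit := by
  ext x
  have rx : Coalgebra.Repr k x (H × H) := ℛ k x
  have ra : ∀ i : rx.ι, Coalgebra.Repr k (rx.left i) (H × H) := fun i => ℛ k _
  have rb : ∀ i : rx.ι, Coalgebra.Repr k (rx.right i) (H × H) := fun i => ℛ k _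
  have rs : ∀ i : rx.ι, Coalgebra.Repr k (S (rx.right i)) (H × H) := fun i => ℛ k _
  have r1 : Coalgebra.Repr k (1 : H) (H × H) := ℛ k 1
  have key := coassoc_tri
    (f.smulRight (((LinearMap.mul k H).compl₁₂ (εs k H) S).compr₂ f)) x rx ra rb
  simp only [LinearMap.smulRight_apply, LinearMap.smul_apply, LinearMap.compr₂_apply,
    LinearMap.compl₁₂_apply, LinearMap.mul_apply', smul_eq_mul] at key
  calc conv k H f (f ∘ₗ S) x
      = ∑ i ∈ rx.index, f (rx.left i) * f (S (rx.right i)) := by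
        rw [conv_repr f (f ∘ₗ S) x rx]
        simp only [coe_comp, Function.comp_apply]
    _ = ∑ i ∈ rx.index, ∑ j ∈ (rb i).index,
          f (rx.left i) * f (εs k H ((rb i).left j) * S ((rb i).right j)) := by
        refine Finset.sum_congr rfl fun i _ => ?_
        rw [← antipode_εs_S hS2 hS3 (rx.right i) (rb i), map_sum, Finset.mul_sum]
    _ = ∑ i ∈ rx.index, ∑ j ∈ (ra i).index,
          f ((ra i).left j) * f (εs k H ((ra i).right j) * S (rx.right i)) := key.symm
    _ = ∑ i ∈ rx.index, ∑ j ∈ (ra i).index, f ((ra i).left j) *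
          ∑ p ∈ r1.index, f (r1.left p * S (rx.right i)) *
            Coalgebra.counit (R := k) (((ra i).right j) * r1.right p) := by
        refine Finset.sum_congr rfl fun i _ => Finset.sum_congr rfl fun j _ => ?_
        congr 1
        rw [εs_repr ((ra i).right j) r1, Finset.sum_mul, map_sum]
        simp only [smul_mul_assoc, map_smul, smul_eq_mul]
        exact Finset.sum_congr rfl fun p _ => by ring
    _ = ∑ i ∈ rx.index, ∑ j ∈ (ra i).index, f ((ra i).left j) *
          ∑ l ∈ (rs i).index, f ((rs i).left l) *
            Coalgebra.counit (R := k) (((ra i).right j) * (rs i).right l) := by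
        refine Finset.sum_congr rfl fun i _ => Finset.sum_congr rfl fun j _ => ?_
        rw [W8 f r1 ((ra i).right j) (S (rx.right i)) (rs i)]
    _ = ∑ i ∈ rx.index, f (rx.left i * S (rx.right i)) := by
        refine Finset.sum_congr rfl fun i _ => ?_
        rw [DG1 hdg1 (rx.left i) (S (rx.right i)) (ra i) (rs i)]
        refine Finset.sum_congr rfl fun j _ => ?_
        rw [Finset.mul_sum]
        exact Finset.sum_congr rfl fun l _ => by ring
    _ = f (εt k H x) := by rw [← antipode1_repr hS1 x rx, map_sum]
    _ = Coalgebra.counit (R := k) x := hfεt x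

end Lemmas5
end WeakBialgebraPaper
open WeakBialgebraPaper in
/-- A dual group-like linear form `f` on a weak Hopf algebra satisfies
`f∘S = f̄` and `f∘ε_s = ε = f∘ε_t`. -/
theorem dualGroupLike_antipode_counital (k H : Type*) [Field k] [Ring H] [Algebra k H]
    [Coalgebra k H] [WeakBialgebra k H] (S : H →ₗ[k] H) (hS : IsAntipode k H S)
    (f fbar : H →ₗ[k] k) (hf : IsDualGroupLike k H f fbar) :
    (∀ x : H, f (S x) = fbar x) ∧
    (∀ x : H, f (εs k H x) = Coalgebra.counit (R := k) x) ∧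
    (∀ x : H, f (εt k H x) = Coalgebra.counit (R := k) x) := by
  obtain ⟨hS1, hS2, hS3⟩ := hS
  have hεt : f ∘ₗ εt k H = Coalgebra.counit := f_comp_εt hf
  have hεs : f ∘ₗ εs k H = Coalgebra.counit := f_comp_εs hf
  have hmain : conv k H f (f ∘ₗ S) = Coalgebra.counit :=
    conv_f_fS hf.2.2.1 (fun z => LinearMap.congr_fun hεt z) hS1 hS2 hS3
  have hfS : f ∘ₗ S = fbar := by
    calc f ∘ₗ S = conv k H Coalgebra.counit (f ∘ₗ S) := (conv_counit_left _).symm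
      _ = conv k H (conv k H fbar f) (f ∘ₗ S) := by rw [hf.2.1]
      _ = conv k H fbar (conv k H f (f ∘ₗ S)) := conv_assoc _ _ _
      _ = conv k H fbar Coalgebra.counit := by rw [hmain]
      _ = fbar := conv_counit_right _
  exact ⟨fun x => LinearMap.congr_fun hfS x, fun x => LinearMap.congr_fun hεs x,
    fun x => LinearMap.congr_fun hεt x⟩
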